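/- Let g = \u03a3_{i\u2265N} x_i t^i \u2208 SL_n(\u2102((t))) with g \u2208 SL_n(\u2102[[t]]) t^\u03bb SL_n(\u2102[[t]]) for \u03bb = (a_1 \u2265 ... \u2265 a_n), \u03a3 a_i = 0. Then for any s \u2265 1, the rank of the block upper-triangular ns \u00d7 ns matrix with (i,j)-block x_{N+j-i} for j \u2265 i (and 0 below) equals \u03a3_{j=1}^n max{s - (a_j - a_n), 0}, where N = a_n. -/

import Mathlib

/-!
Since `λ` is dominant, `λ = a_n + c` with `c_j = a_j - a_n ≥ 0`, so `g = t^{a_n} h` with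
`h = A t^c B` a matrix of power series. The constant term of `h` is `A(0) t^c(0) B(0) ≠ 0`
(as `c_n = 0`), which forces `N = a_n`, and then the block matrix is `T_s(h)`, where `T_s` sends a
power series to the upper triangular Toeplitz matrix of its first `s` coefficients. `T_s` is the
action on `R⟦X⟧ ⧸ (X ^ s)` (on row vectors), hence a ring homomorphism, so
`rank T_s(h) = rank T_s(t^c)`, and `T_s(t^c)` is a direct sum of shifts of ranks `max(s - c_j, 0)`.
-/

open Matrix

open scoped PowerSeries LaurentSeries

theorem Fin.sum_ite_le_mul_ite_le {R : Type*} [Semiring R] {s : ℕ} (i j : Fin s)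
    (F G : ℕ → R) :
    (∑ k : Fin s, (if (i : ℕ) ≤ k then F k else 0) * (if (k : ℕ) ≤ j then G k else 0)) =
      ∑ k ∈ Finset.Icc (i : ℕ) j, F k * G k := by
  simp only [ite_mul, mul_ite, zero_mul, mul_zero, ← ite_and]
  rw [Fin.sum_univ_eq_sum_range (fun k => if k ≤ j ∧ (i : ℕ) ≤ k then F k * G k else 0),
    ← Finset.sum_filter]
  congr 1
  ext k
  simp only [Finset.mem_filter, Finset.mem_range, Finset.mem_Icc]
  omega

theorem Matrix.rank_eq_card_of_submatrix_eq_one {R : Type*} [CommSemiring R]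
    [StrongRankCondition R] {m n ι : Type*} [Fintype n] [Fintype ι] [DecidableEq ι]
    [DecidableEq m] (A : Matrix m n R) (r : ι → m) (c : ι → n) (hone : A.submatrix r c = 1)
    (hrow : ∀ i, A i ≠ 0 → i ∈ Set.range r) : A.rank = Fintype.card ι := by
  refine le_antisymm ?_ ?_
  · refine (A.rank_le_card_of_support_subset (Finset.univ.image r) fun i hi => ?_).trans
      Finset.card_image_le
    obtain ⟨k, rfl⟩ := hrow i hi
    simp
  · calc Fintype.card ι = (1 : Matrix ι ι R).rank := rank_one.symm
      _ ≤ A.rank := hone ▸ A.rank_submatrix_le r c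

namespace PowerSeries

section Semiring

variable {R : Type*} [Semiring R] {n : Type*} [Fintype n] [DecidableEq n]

noncomputable def toeplitz (s : ℕ) : R⟦X⟧ →+* Matrix (Fin s) (Fin s) R where
  toFun f := Matrix.of fun i j => if (i : ℕ) ≤ j then coeff (j - i : ℕ) f else 0
  map_zero' := by ext; simp
  map_add' f g := by ext; simp only [of_apply, map_add, Matrix.add_apply]; split_ifs <;> simp
  map_one' := by
    ext i j
    simp only [of_apply, coeff_one, one_apply, Fin.ext_iff]
    split_ifs <;> first | rfl | omega
  map_mul' f g := by
    ext i j
    simp only [of_apply, mul_apply]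
    rw [Fin.sum_ite_le_mul_ite_le i j (fun k => coeff (k - i) f) (fun k => coeff (j - k) g)]
    split_ifs with hij
    · rw [coeff_mul,
        Finset.Nat.sum_antidiagonal_eq_sum_range_succ (fun a b => coeff a f * coeff b g),
        ← Finset.Ico_add_one_right_eq_Icc, Finset.sum_Ico_eq_sum_range]
      refine Finset.sum_congr (by congr 1; omega) fun a _ => ?_
      congr 3 <;> omega
    · rw [Finset.Icc_eq_empty (by omega), Finset.sum_empty]

theorem toeplitz_apply (s : ℕ) (f : R⟦X⟧) (i j : Fin s) :
    toeplitz s f i j = if (i : ℕ) ≤ j then coeff (j - i : ℕ) f else 0 := rfl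

theorem toeplitz_X_pow_apply (s c : ℕ) (i j : Fin s) :
    toeplitz s (X ^ c : R⟦X⟧) i j = if (i : ℕ) + c = j then 1 else 0 := by
  rw [toeplitz_apply, coeff_X_pow]
  split_ifs <;> first | rfl | omega

noncomputable def blockToeplitz (s : ℕ) :
    Matrix n n R⟦X⟧ →+* Matrix (Fin s × n) (Fin s × n) R :=
  ((compRingEquiv n (Fin s) R).trans
    (reindexRingEquiv R (Equiv.prodComm n (Fin s)))).toRingHom.comp (toeplitz s).mapMatrix

theorem blockToeplitz_apply (s : ℕ) (M : Matrix n n R⟦X⟧) (p q : Fin s × n) :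
    blockToeplitz s M p q = toeplitz s (M p.2 q.2) p.1 q.1 := rfl

theorem blockToeplitz_diagonal_apply (s : ℕ) (d : n → R⟦X⟧) (p q : Fin s × n) :
    blockToeplitz s (diagonal d) p q = if p.2 = q.2 then toeplitz s (d p.2) p.1 q.1 else 0 := by
  rw [blockToeplitz_apply, diagonal_apply]
  split_ifs <;> simp

end Semiring

variable {R : Type*} [CommRing R] {n : Type*} [Fintype n] [DecidableEq n]

theorem rank_blockToeplitz_diagonal_X_pow [Nontrivial R] (s : ℕ) (c : n → ℕ) :
    (blockToeplitz s (diagonal fun j => (X : R⟦X⟧) ^ c j)).rank = ∑ j, (s - c j) := by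
  let S := {p : Fin s × n // (p.1 : ℕ) + c p.2 < s}
  rw [rank_eq_card_of_submatrix_eq_one _ (Subtype.val : S → Fin s × n)
    (fun p => (⟨p.1.1 + c p.1.2, p.2⟩, p.1.2))]
  · rw [Fintype.card_subtype, Finset.card_filter, Fintype.sum_prod_type_right]
    refine Finset.sum_congr rfl fun j _ => ?_
    rw [← Finset.card_filter]
    simp_rw [show ∀ i : Fin s, (i : ℕ) + c j < s ↔ (i : ℕ) < s - c j from fun i => by omega]
    rw [Fin.card_filter_val_lt, min_eq_right (Nat.sub_le _ _)]
  · ext ⟨⟨i, k⟩, hik⟩ ⟨⟨i', l⟩, hil⟩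
    simp only [submatrix_apply, blockToeplitz_diagonal_apply, toeplitz_X_pow_apply, one_apply,
      Subtype.ext_iff, Prod.ext_iff, Fin.ext_iff]
    by_cases hkl : k = l
    · subst hkl
      simp
    · simp [hkl]
  · intro p hp
    by_contra hS
    refine hp (funext fun q => ?_)
    have : s ≤ p.1 + c p.2 := by simpa [S] using hS
    rw [blockToeplitz_diagonal_apply, toeplitz_X_pow_apply]
    split_ifs <;> first | rfl | omega

theorem isUnit_det_blockToeplitz (s : ℕ) {M : Matrix n n R⟦X⟧} (hM : IsUnit M.det) :
    IsUnit (blockToeplitz s M).det :=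
  (isUnit_iff_isUnit_det _).mp (((isUnit_iff_isUnit_det M).mpr hM).map _)

theorem rank_blockToeplitz_mul_diagonal_X_pow_mul [Nontrivial R] (s : ℕ)
    {A B : Matrix n n R⟦X⟧} (hA : IsUnit A.det) (hB : IsUnit B.det) (c : n → ℕ) :
    (blockToeplitz s (A * diagonal (fun j => X ^ c j) * B)).rank = ∑ j, (s - c j) := by
  rw [map_mul, map_mul, rank_mul_eq_left_of_isUnit_det _ _ (isUnit_det_blockToeplitz s hB),
    rank_mul_eq_right_of_isUnit_det _ _ (isUnit_det_blockToeplitz s hA),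
    rank_blockToeplitz_diagonal_X_pow]

theorem map_constantCoeff_mul_diagonal_X_pow_mul_ne_zero [Nontrivial R]
    {A B : Matrix n n R⟦X⟧} (hA : IsUnit A.det) (hB : IsUnit B.det) {c : n → ℕ} {j : n}
    (hj : c j = 0) : (A * diagonal (fun j => X ^ c j) * B).map constantCoeff ≠ 0 := by
  have hunit {M : Matrix n n R⟦X⟧} (hM : IsUnit M.det) :
      IsUnit ((constantCoeff (R := R)).mapMatrix M) :=
    ((isUnit_iff_isUnit_det M).mpr hM).map _
  intro h
  rw [← RingHom.mapMatrix_apply, map_mul, map_mul, (hunit hB).mul_left_eq_zero,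
    (hunit hA).mul_right_eq_zero] at h
  simpa [hj] using congr_fun₂ h j j

end PowerSeries

namespace LaurentSeries

open HahnSeries

variable {R : Type*} [CommRing R] {n : Type*}

theorem exists_map_ofPowerSeries_eq (A : Matrix n n R⸨X⸩)
    (hA : ∀ k l, ∀ i < (0 : ℤ), (A k l).coeff i = 0) :
    ∃ A' : Matrix n n R⟦X⟧, A'.map (ofPowerSeries ℤ R) = A := by
  refine ⟨of fun k l => PowerSeries.mk fun m => (A k l).coeff m, ext fun k l => ?_⟩
  ext i
  rw [map_apply, PowerSeries.coeff_coe]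
  split_ifs with hi
  · exact (hA k l i hi).symm
  · simp [abs_of_nonneg (not_lt.mp hi)]

variable [Fintype n] [DecidableEq n]

theorem det_eq_one_of_det_map_ofPowerSeries {A : Matrix n n R⟦X⟧}
    (hA : (A.map (ofPowerSeries ℤ R)).det = 1) : A.det = 1 :=
  ofPowerSeries_injective (Γ := ℤ) <| by
    rw [RingHom.map_det, RingHom.mapMatrix_apply, hA, map_one]

theorem map_ofPowerSeries_mul_diagonal_single_mul (A B : Matrix n n R⟦X⟧) {a : ℤ}
    {c : n → ℕ} {lam : n → ℤ} (hc : ∀ j, a + c j = lam j) :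
    A.map (ofPowerSeries ℤ R) * diagonal (fun j => single (lam j) (1 : R)) *
        B.map (ofPowerSeries ℤ R) =
      single a (1 : R) •
        (A * diagonal (fun j => PowerSeries.X ^ c j) * B).map (ofPowerSeries ℤ R) := by
  have hdiag : diagonal (fun j => single (lam j) (1 : R)) =
      single a (1 : R) • diagonal fun j => single (c j : ℤ) 1 := by
    rw [← diagonal_smul]
    congr 1
    funext j
    rw [Pi.smul_apply, smul_eq_mul, single_mul_single, one_mul, hc]
  rw [Matrix.map_mul, Matrix.map_mul, diagonal_map (map_zero _), hdiag, Matrix.mul_smul,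
    Matrix.smul_mul]
  simp

end LaurentSeries

/-- Let `g = Σ_{i ≥ N} x_i t^i ∈ SL_n(ℂ((t)))` with `x_N ≠ 0`, and
`g ∈ SL_n(ℂ[[t]]) t^λ SL_n(ℂ[[t]])` for `λ = (a_1 ≥ ... ≥ a_n)`, `Σ a_i = 0` (so that
`N = a_n`).  Then for any `s ≥ 1`, the rank of the `s × s` block upper-triangular
(block Toeplitz) matrix with `(i,j)`-block `x_{N+j-i}` for `j ≥ i` (and `0` below) equals
`Σ_{j=1}^n max{s - (a_j - a_n), 0}`. -/
theorem stmt11 (n : ℕ) (hn : 0 < n) (N : ℤ)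
    (g : Matrix (Fin n) (Fin n) (LaurentSeries ℂ))
    (x : ℤ → Matrix (Fin n) (Fin n) ℂ)
    (hx : ∀ (i : ℤ) (k l : Fin n), x i k l = (g k l).coeff i)
    (hlow : ∀ i < N, x i = 0) (hN : x N ≠ 0)
    (lam : Fin n → ℤ)
    (hdom : ∀ i j : Fin n, i ≤ j → lam j ≤ lam i)
    (hmem : ∃ A B : Matrix (Fin n) (Fin n) (LaurentSeries ℂ),
      (∀ k l : Fin n, ∀ i < (0 : ℤ), (A k l).coeff i = 0) ∧ A.det = 1 ∧
      (∀ k l : Fin n, ∀ i < (0 : ℤ), (B k l).coeff i = 0) ∧ B.det = 1 ∧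
      g = A * Matrix.diagonal (fun j => (HahnSeries.single (lam j) (1 : ℂ))) * B)
    (s : ℕ) :
    (Matrix.of fun p q : Fin s × Fin n =>
        if (p.1 : ℕ) ≤ (q.1 : ℕ) then x (N + ((q.1 : ℕ) - (p.1 : ℕ) : ℕ)) p.2 q.2
        else 0).rank =
      ∑ j : Fin n, ((s : ℤ) - (lam j - lam ⟨n - 1, by omega⟩)).toNat := by
  obtain ⟨A, B, hA, hAdet, hB, hBdet, rfl⟩ := hmem
  obtain ⟨A, rfl⟩ := LaurentSeries.exists_map_ofPowerSeries_eq A hA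
  obtain ⟨B, rfl⟩ := LaurentSeries.exists_map_ofPowerSeries_eq B hB
  have hAu : IsUnit A.det :=
    (LaurentSeries.det_eq_one_of_det_map_ofPowerSeries hAdet) ▸ isUnit_one
  have hBu : IsUnit B.det :=
    (LaurentSeries.det_eq_one_of_det_map_ofPowerSeries hBdet) ▸ isUnit_one
  set last : Fin n := ⟨n - 1, by omega⟩
  obtain ⟨c, hc⟩ : ∃ c : Fin n → ℕ, ∀ j, lam last + c j = lam j :=
    ⟨fun j => (lam j - lam last).toNat, fun j => by
      have := hdom j last (Fin.le_iff_val_le_val.mpr (by simp only [last]; omega))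
      dsimp only
      omega⟩
  rw [LaurentSeries.map_ofPowerSeries_mul_diagonal_single_mul A B hc] at hx
  set h := A * diagonal (fun j => PowerSeries.X ^ c j) * B
  have hx_add (m : ℤ) (k l : Fin n) : x (lam last + m) k l = (h k l : ℂ⸨X⸩).coeff m := by
    rw [hx, Matrix.smul_apply, smul_eq_mul, map_apply, add_comm, HahnSeries.coeff_single_mul_add,
      one_mul]
  have hNa : N = lam last := by
    refine le_antisymm (not_lt.mp fun hlt => ?_) (not_lt.mp fun hlt => hN ?_)
    · refine PowerSeries.map_constantCoeff_mul_diagonal_X_pow_mul_ne_zero hAu hBu (j := last)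
        (by linarith [hc last]) (ext fun k l => ?_)
      simpa [h, hlow _ hlt, PowerSeries.coeff_coe] using (hx_add 0 k l).symm
    · ext k l
      rw [← add_sub_cancel (lam last) N, hx_add, PowerSeries.coeff_coe, if_pos (by omega)]
      rfl
  trans (PowerSeries.blockToeplitz s h).rank
  · congr 1
    ext p q
    simp [PowerSeries.blockToeplitz_apply, PowerSeries.toeplitz_apply, hNa, hx_add]
  · rw [PowerSeries.rank_blockToeplitz_mul_diagonal_X_pow_mul s hAu hBu]
    refine Finset.sum_congr rfl fun j _ => ?_
    rw [← hc j]
    omega
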